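/- arXiv:2312.07215 — 2 statements merged into one kernel-verified Lean document; each statement's English description precedes it below -/
import Mathlib

section
/- Each energy-stepping velocity update (diffraction or reflection) across a jump of ΔV ∈ {h, −h, 0} in the terraced potential exactly conserves the total discrete energy H_h(q, q̇) = ½ q̇ᵀ M q̇ + V_h(q): the kinetic energy changes by exactly −ΔV_effective, where ΔV_effective is the actual potential jump realized (ΔV for diffraction, 0 for reflection). -/
open Matrix

/-!
Each update moves the velocity along `M⁻¹ n`. For a symmetric `M`, the kinetic energy along the
line `q̇ + λ M⁻¹ n` is the quadratic `½ q̇ᵀMq̇ + λ (q̇·n) + ½ λ² c` with `c = nᵀM⁻¹n > 0`, so the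
kinetic energy changes by `k / 2` exactly when `λ (2 q̇·n + λ c) = k`; completing the square, this
says `(c λ + q̇·n)² = (q̇·n)² + k c`. The three multipliers are built to satisfy this with
`k = 2h` (the square roots), `k = -2h`, and `k = 0` (`c λ + q̇·n = -q̇·n`).
-/

section QuadraticForm

variable {ι R : Type*} [Fintype ι] [CommRing R]

theorem Matrix.IsSymm.dotProduct_mulVec_comm {M : Matrix ι ι R} (hM : M.IsSymm) (x y : ι → R) :
    x ⬝ᵥ M *ᵥ y = y ⬝ᵥ M *ᵥ x := by
  rw [dotProduct_mulVec, ← mulVec_transpose, hM.eq, dotProduct_comm]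

variable [DecidableEq ι]

theorem Matrix.mulVec_inv_mulVec {M : Matrix ι ι R} (hdet : IsUnit M.det) (v : ι → R) :
    M *ᵥ (M⁻¹ *ᵥ v) = v := by
  rw [mulVec_mulVec, mul_nonsing_inv _ hdet, one_mulVec]

theorem Matrix.IsSymm.dotProduct_mulVec_add_smul_inv_mulVec {M : Matrix ι ι R} (hM : M.IsSymm)
    (hdet : IsUnit M.det) (q v : ι → R) (t : R) :
    (q + t • M⁻¹ *ᵥ v) ⬝ᵥ M *ᵥ (q + t • M⁻¹ *ᵥ v)
      = q ⬝ᵥ M *ᵥ q + t * (2 * (q ⬝ᵥ v) + t * (v ⬝ᵥ M⁻¹ *ᵥ v)) := by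
  have hcross : (M⁻¹ *ᵥ v) ⬝ᵥ M *ᵥ q = q ⬝ᵥ v := by
    rw [hM.dotProduct_mulVec_comm, mulVec_inv_mulVec hdet]
  rw [mulVec_add, mulVec_smul, mulVec_inv_mulVec hdet, add_dotProduct, smul_dotProduct,
    dotProduct_add, dotProduct_add, dotProduct_smul, dotProduct_smul, hcross,
    dotProduct_comm (M⁻¹ *ᵥ v) v]
  simp only [smul_eq_mul]
  ring

end QuadraticForm

theorem mul_two_mul_add_mul_eq_of_sq_mul_add_eq {R : Type*} [CommRing R] [IsDomain R]
    {a c t k : R} (hc : c ≠ 0) (h : (c * t + a) ^ 2 = a ^ 2 + k * c) :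
    t * (2 * a + t * c) = k :=
  mul_left_cancel₀ hc <| by linear_combination h

/-- Each energy-stepping velocity update (downhill diffraction, uphill
diffraction, or reflection) exactly conserves the total discrete energy
`H_h(q,q̇) = ½ q̇ᵀMq̇ + V_h(q)`: the kinetic energy changes by exactly
`−ΔV_effective`, where the effective potential jump is `−h` for downhill
diffraction, `h` for uphill diffraction, and `0` for reflection. -/
theorem energy_stepping_update_conserves_energy
    (d : ℕ) (M : Matrix (Fin d) (Fin d) ℝ) (hM : M.PosDef)
    (nv qm : Fin d → ℝ) (hnv : nv ≠ 0) (h : ℝ) (hh : 0 < h)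
    (c : ℝ) (hc : c = nv ⬝ᵥ M⁻¹.mulVec nv) :
    -- downhill diffraction: ΔV_effective = −h
    (∀ qp : Fin d → ℝ,
      qp = qm + ((-(qm ⬝ᵥ nv) - Real.sqrt ((qm ⬝ᵥ nv) ^ 2 + 2 * h * c)) / c)
          • M⁻¹.mulVec nv →
      (1 / 2) * (qp ⬝ᵥ M.mulVec qp) = (1 / 2) * (qm ⬝ᵥ M.mulVec qm) - (-h)) ∧
    -- uphill diffraction: ΔV_effective = h
    (∀ qp : Fin d → ℝ, (qm ⬝ᵥ nv) ^ 2 > 2 * h * c →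
      qp = qm + ((-(qm ⬝ᵥ nv) + Real.sqrt ((qm ⬝ᵥ nv) ^ 2 - 2 * h * c)) / c)
          • M⁻¹.mulVec nv →
      (1 / 2) * (qp ⬝ᵥ M.mulVec qp) = (1 / 2) * (qm ⬝ᵥ M.mulVec qm) - h) ∧
    -- reflection: ΔV_effective = 0
    (∀ qp : Fin d → ℝ, (qm ⬝ᵥ nv) ^ 2 < 2 * h * c →
      qp = qm - (2 * (qm ⬝ᵥ nv) / c) • M⁻¹.mulVec nv →
      (1 / 2) * (qp ⬝ᵥ M.mulVec qp) = (1 / 2) * (qm ⬝ᵥ M.mulVec qm) - 0) := by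
  have hc_pos : 0 < c := by simpa [hc] using hM.inv.dotProduct_mulVec_pos hnv
  set a := qm ⬝ᵥ nv
  have energy (t k : ℝ) (ht : (c * t + a) ^ 2 = a ^ 2 + k * c) :
      (1 / 2) * ((qm + t • M⁻¹ *ᵥ nv) ⬝ᵥ M *ᵥ (qm + t • M⁻¹ *ᵥ nv))
        = (1 / 2) * (qm ⬝ᵥ M *ᵥ qm) + k / 2 := by
    have hsymm : M.IsSymm := isHermitian_iff_isSymm.mp hM.isHermitian
    rw [hsymm.dotProduct_mulVec_add_smul_inv_mulVec (isUnit_iff_ne_zero.mpr hM.det_pos.ne') qm nv, ← hc,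
      mul_two_mul_add_mul_eq_of_sq_mul_add_eq hc_pos.ne' ht]
    ring
  refine ⟨fun qp hqp => ?_, fun qp hgt hqp => ?_, fun qp _ hqp => ?_⟩
  · rw [hqp, energy _ (2 * h)]
    · ring
    rw [mul_div_cancel₀ _ hc_pos.ne']
    linear_combination Real.sq_sqrt (by positivity : 0 ≤ a ^ 2 + 2 * h * c)
  · rw [hqp, energy _ (-2 * h)]
    · ring
    rw [mul_div_cancel₀ _ hc_pos.ne']
    linear_combination Real.sq_sqrt (by linarith : 0 ≤ a ^ 2 - 2 * h * c)
  · rw [hqp, sub_eq_add_neg, ← neg_smul, ← neg_div, energy _ 0]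
    · ring
    rw [mul_div_cancel₀ _ hc_pos.ne']
    ring
end

section
/- The uphill diffraction update is reversed by the downhill diffraction update: if (v·n)² > 2h nᵀM⁻¹n and w = v + λ₊(v,n)M⁻¹n is the uphill update, then applying the downhill update with normal −n to w recovers v (time reversibility across an energy step). -/
open Matrix

/-!
Along the normal the update is one-dimensional. With `a = v·n` and `q = nᵀM⁻¹n > 0`, the uphill
step turns the normal velocity `a` into `s = √(a² − 2hq)`. Seen from `−n`, the downhill step then
has multiplier `(s − √(s² + 2hq))/q = (s − a)/q = λ₊(v,n)`, so it moves `w` by `−λ₊(v,n)M⁻¹n`,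
exactly undoing the uphill step.
-/

lemma dotProduct_add_smul_mulVec_self {ι R : Type*} [Fintype ι] [CommSemiring R]
    (A : Matrix ι ι R) (v n : ι → R) (c : R) :
    (v + c • A *ᵥ n) ⬝ᵥ n = v ⬝ᵥ n + c * (n ⬝ᵥ A *ᵥ n) := by
  rw [add_dotProduct, smul_dotProduct, smul_eq_mul, dotProduct_comm (A *ᵥ n)]

lemma Real.sqrt_sqrt_sub_sq_add {a c : ℝ} (ha : 0 ≤ a) (hc : c ≤ a ^ 2) :
    √(√(a ^ 2 - c) ^ 2 + c) = a := by
  rw [Real.sq_sqrt (sub_nonneg.mpr hc), sub_add_cancel, Real.sqrt_sq ha]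

theorem uphill_reversed_by_downhill_general
    (d : ℕ) (M : Matrix (Fin d) (Fin d) ℝ) (hM : M.PosDef)
    (nv v : Fin d → ℝ) (hnv : nv ≠ 0) (h : ℝ)
    (hadv : 0 < v ⬝ᵥ nv)
    (htrans : (v ⬝ᵥ nv) ^ 2 > 2 * h * (nv ⬝ᵥ M⁻¹.mulVec nv))
    (lamPlus : (Fin d → ℝ) → (Fin d → ℝ) → ℝ)
    (hlamPlus : ∀ u m, lamPlus u m =
      (-(u ⬝ᵥ m) + Real.sqrt ((u ⬝ᵥ m) ^ 2 - 2 * h * (m ⬝ᵥ M⁻¹.mulVec m))) /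
        (m ⬝ᵥ M⁻¹.mulVec m))
    (lamMinus : (Fin d → ℝ) → (Fin d → ℝ) → ℝ)
    (hlamMinus : ∀ u m, lamMinus u m =
      (-(u ⬝ᵥ m) - Real.sqrt ((u ⬝ᵥ m) ^ 2 + 2 * h * (m ⬝ᵥ M⁻¹.mulVec m))) /
        (m ⬝ᵥ M⁻¹.mulVec m))
    (w : Fin d → ℝ)
    (hw : w = v + lamPlus v nv • M⁻¹.mulVec nv) :
    w + lamMinus w (-nv) • M⁻¹.mulVec (-nv) = v := by
  have hq : 0 < nv ⬝ᵥ M⁻¹ *ᵥ nv := by simpa using hM.inv.dotProduct_mulVec_pos hnv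
  have hwn : w ⬝ᵥ nv = √((v ⬝ᵥ nv) ^ 2 - 2 * h * (nv ⬝ᵥ M⁻¹ *ᵥ nv)) := by
    rw [hw, dotProduct_add_smul_mulVec_self, hlamPlus, div_mul_cancel₀ _ hq.ne']
    ring
  have hlam : lamMinus w (-nv) = lamPlus v nv := by
    simp only [hlamMinus, hlamPlus, mulVec_neg, dotProduct_neg, neg_dotProduct, neg_neg, hwn,
      neg_sq]
    rw [Real.sqrt_sqrt_sub_sq_add hadv.le htrans.le]
    ring
  rw [hlam, hw, mulVec_neg, smul_neg, add_neg_cancel_right]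

/-- Time reversibility across an energy step: the uphill diffraction update
(with normal `n`, in the direction of advance `v·n > 0`) is reversed by the
downhill diffraction update with normal `−n`. -/
theorem uphill_reversed_by_downhill
    (d : ℕ) (M : Matrix (Fin d) (Fin d) ℝ) (hM : M.PosDef)
    (nv v : Fin d → ℝ) (hnv : nv ≠ 0) (h : ℝ) (hh : 0 < h)
    (hadv : 0 < v ⬝ᵥ nv)
    (htrans : (v ⬝ᵥ nv) ^ 2 > 2 * h * (nv ⬝ᵥ M⁻¹.mulVec nv))
    (lamPlus : (Fin d → ℝ) → (Fin d → ℝ) → ℝ)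
    (hlamPlus : ∀ u m, lamPlus u m =
      (-(u ⬝ᵥ m) + Real.sqrt ((u ⬝ᵥ m) ^ 2 - 2 * h * (m ⬝ᵥ M⁻¹.mulVec m))) /
        (m ⬝ᵥ M⁻¹.mulVec m))
    (lamMinus : (Fin d → ℝ) → (Fin d → ℝ) → ℝ)
    (hlamMinus : ∀ u m, lamMinus u m =
      (-(u ⬝ᵥ m) - Real.sqrt ((u ⬝ᵥ m) ^ 2 + 2 * h * (m ⬝ᵥ M⁻¹.mulVec m))) /
        (m ⬝ᵥ M⁻¹.mulVec m))
    (w : Fin d → ℝ)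
    (hw : w = v + lamPlus v nv • M⁻¹.mulVec nv) :
    w + lamMinus w (-nv) • M⁻¹.mulVec (-nv) = v :=
  uphill_reversed_by_downhill_general d M hM nv v hnv h hadv htrans lamPlus hlamPlus lamMinus
    hlamMinus w hw
end
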